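/- The pullback of the contact form ω = dt + 2x dy - 2y dx under Φ(ξ,ψ,η) = (i cos^{1/2}ψ e^{(ξ+i(ψ-3η))/2}, -e^ξ sinψ) equals Φ*ω = -e^ξ (sinψ dξ + 3 cosψ dη). -/

import Mathlib

noncomputable section

open Real

/-- Logarithmic coordinates map Φ(ξ,ψ,η) = (i·cos^{1/2}ψ·e^{(ξ+i(ψ-3η))/2}, -e^ξ·sinψ). -/
def Phi (ξ ψ η : ℝ) : ℂ × ℝ :=
  (Complex.I * (Real.sqrt (Real.cos ψ) : ℂ) *
      Complex.exp ((↑ξ + Complex.I * (↑ψ - 3 * ↑η)) / 2),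
    -Real.exp ξ * Real.sin ψ)

/-- x-component of Φ. -/
def Phix (ξ ψ η : ℝ) : ℝ := (Phi ξ ψ η).1.re
/-- y-component of Φ. -/
def Phiy (ξ ψ η : ℝ) : ℝ := (Phi ξ ψ η).1.im
/-- t-component of Φ. -/
def Phit (ξ ψ η : ℝ) : ℝ := (Phi ξ ψ η).2

lemma phix_eq (ξ ψ η : ℝ) :
    Phix ξ ψ η = -(Real.sqrt (Real.cos ψ) * Real.sin ((ψ - 3*η)/2)) * Real.exp (ξ/2) := by
  simp [Phix, Phi, Complex.exp_re, Complex.exp_im, Complex.mul_re, Complex.mul_im,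
    Complex.div_re, Complex.div_im, Complex.normSq]
  ring_nf

lemma phiy_eq (ξ ψ η : ℝ) :
    Phiy ξ ψ η = (Real.sqrt (Real.cos ψ) * Real.cos ((ψ - 3*η)/2)) * Real.exp (ξ/2) := by
  simp [Phiy, Phi, Complex.exp_re, Complex.exp_im, Complex.mul_re, Complex.mul_im,
    Complex.div_re, Complex.div_im, Complex.normSq]
  ring_nf

lemma phit_eq (ξ ψ η : ℝ) : Phit ξ ψ η = -Real.exp ξ * Real.sin ψ := rfl

-- derivative of s ↦ exp (s/2)
lemma hexp2 (ξ : ℝ) : HasDerivAt (fun s : ℝ => Real.exp (s/2)) (Real.exp (ξ/2) * (1/2)) ξ :=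
  by have := (Real.hasDerivAt_exp (ξ/2)).comp ξ ((hasDerivAt_id ξ).div_const 2); exact this

-- derivative in ψ of s ↦ √(cos s) * trig((s-3η)/2)
lemma hsqrtcos (ψ : ℝ) (hc : Real.cos ψ ≠ 0) :
    HasDerivAt (fun s : ℝ => Real.sqrt (Real.cos s))
      (1 / (2 * Real.sqrt (Real.cos ψ)) * (-Real.sin ψ)) ψ :=
  (Real.hasDerivAt_sqrt hc).comp ψ (Real.hasDerivAt_cos ψ)

lemma hin            (ψ η : ℝ) : HasDerivAt (fun s : ℝ => (s - 3*η)/2) (1/2) ψ := by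
  simpa using ((hasDerivAt_id ψ).sub_const (3*η)).div_const 2

lemma hin2 (ψ η : ℝ) : HasDerivAt (fun s : ℝ => (ψ - 3*s)/2) (-3/2) η := by
  have : HasDerivAt (fun s : ℝ => ψ - 3*s) (-3) η := by
    simpa using (HasDerivAt.const_sub ψ ((hasDerivAt_id η).const_mul 3))
  simpa using this.div_const 2


/-- The contact form ω = dt + 2x dy - 2y dx evaluated on the pushforward of a
coordinate vector, i.e. the components of the pullback Φ*ω:
(Φ*ω)(∂_ξ) = -e^ξ sinψ, (Φ*ω)(∂_ψ) = 0, (Φ*ω)(∂_η) = -3 e^ξ cosψ,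
so that Φ*ω = -e^ξ(sinψ dξ + 3 cosψ dη). -/
theorem pullback_contact_form (ξ ψ η : ℝ) (hψ : ψ ∈ Set.Ioo (-(π / 2)) (π / 2)) :
    (deriv (fun s => Phit s ψ η) ξ
        + 2 * Phix ξ ψ η * deriv (fun s => Phiy s ψ η) ξ
        - 2 * Phiy ξ ψ η * deriv (fun s => Phix s ψ η) ξ
      = -Real.exp ξ * Real.sin ψ) ∧
    (deriv (fun s => Phit ξ s η) ψ
        + 2 * Phix ξ ψ η * deriv (fun s => Phiy ξ s η) ψ
        - 2 * Phiy ξ ψ η * deriv (fun s => Phix ξ s η) ψ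
      = 0) ∧
    (deriv (fun s => Phit ξ ψ s) η
        + 2 * Phix ξ ψ η * deriv (fun s => Phiy ξ ψ s) η
        - 2 * Phiy ξ ψ η * deriv (fun s => Phix ξ ψ s) η
      = -Real.exp ξ * (3 * Real.cos ψ)) := by
  have hcpos : 0 < Real.cos ψ := Real.cos_pos_of_mem_Ioo hψ
  have hc : Real.cos ψ ≠ 0 := ne_of_gt hcpos
  set a := Real.sqrt (Real.cos ψ) with ha
  have hapos : 0 < a := Real.sqrt_pos.mpr hcpos
  have ha2 : a ^ 2 = Real.cos ψ := Real.sq_sqrt hcpos.le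
  set θ := (ψ - 3*η)/2 with hθ
  set e := Real.exp (ξ/2) with he
  have hE : Real.exp ξ = e * e := by
    rw [he, ← Real.exp_add]; ring_nf
  -- ξ derivatives
  have dtξ : deriv (fun s => Phit s ψ η) ξ = -Real.exp ξ * Real.sin ψ := by
    have : HasDerivAt (fun s => Phit s ψ η) (-(Real.exp ξ * Real.sin ψ)) ξ := by
      simp only [phit_eq]
      simpa [neg_mul, mul_comm, Pi.neg_def] using ((Real.hasDerivAt_exp ξ).mul_const (Real.sin ψ)).neg
    simpa using this.deriv
  have dxξ : deriv (fun s => Phix s ψ η) ξ = -(a * Real.sin θ) * (e * (1/2)) := by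
    have : HasDerivAt (fun s => Phix s ψ η) (-(a * Real.sin θ) * (e * (1/2))) ξ := by
      simp only [phix_eq]
      exact (hexp2 ξ).const_mul _
    exact this.deriv
  have dyξ : deriv (fun s => Phiy s ψ η) ξ = (a * Real.cos θ) * (e * (1/2)) := by
    have : HasDerivAt (fun s => Phiy s ψ η) ((a * Real.cos θ) * (e * (1/2))) ξ := by
      simp only [phiy_eq]
      exact (hexp2 ξ).const_mul _
    exact this.deriv
  -- ψ derivatives
  have hsinθ : HasDerivAt (fun s : ℝ => Real.sin ((s - 3*η)/2)) (Real.cos θ * (1/2)) ψ :=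
    by have := (Real.hasDerivAt_sin θ).comp ψ (hin ψ η); exact this
  have hcosθ : HasDerivAt (fun s : ℝ => Real.cos ((s - 3*η)/2)) (-Real.sin θ * (1/2)) ψ :=
    by have := (Real.hasDerivAt_cos θ).comp ψ (hin ψ η); exact this
  have dtψ : deriv (fun s => Phit ξ s η) ψ = -Real.exp ξ * Real.cos ψ := by
    have : HasDerivAt (fun s => Phit ξ s η) (-(Real.exp ξ * Real.cos ψ)) ψ := by
      simp only [phit_eq]
      simpa [neg_mul, Pi.neg_def] using ((Real.hasDerivAt_sin ψ).const_mul (Real.exp ξ)).neg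
    simpa using this.deriv
  have dxψ : deriv (fun s => Phix ξ s η) ψ =
      -((1 / (2 * a) * (-Real.sin ψ)) * Real.sin θ + a * (Real.cos θ * (1/2))) * e := by
    have : HasDerivAt (fun s => Phix ξ s η)
        (-((1 / (2 * a) * (-Real.sin ψ)) * Real.sin θ + a * (Real.cos θ * (1/2))) * e) ψ := by
      simp only [phix_eq]
      exact ((((hsqrtcos ψ hc).mul hsinθ).neg).mul_const e)
    exact this.deriv
  have dyψ : deriv (fun s => Phiy ξ s η) ψ =
      ((1 / (2 * a) * (-Real.sin ψ)) * Real.cos θ + a * (-Real.sin θ * (1/2))) * e := by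
    have : HasDerivAt (fun s => Phiy ξ s η)
        (((1 / (2 * a) * (-Real.sin ψ)) * Real.cos θ + a * (-Real.sin θ * (1/2))) * e) ψ := by
      simp only [phiy_eq]
      exact (((hsqrtcos ψ hc).mul hcosθ).mul_const e)
    exact this.deriv
  -- η derivatives
  have dtη : deriv (fun s => Phit ξ ψ s) η = 0 := by
    simp only [phit_eq]; exact deriv_const _ _
  have dxη : deriv (fun s => Phix ξ ψ s) η = -(a * (Real.cos θ * (-3/2))) * e := by
    have : HasDerivAt (fun s => Phix ξ ψ s) (-(a * (Real.cos θ * (-3/2))) * e) η := by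
      simp only [phix_eq]
      have hs : HasDerivAt (fun s : ℝ => Real.sin ((ψ - 3*s)/2)) (Real.cos θ * (-3/2)) η :=
        by have := (Real.hasDerivAt_sin θ).comp η (hin2 ψ η); exact this
      exact ((hs.const_mul a).neg).mul_const e
    exact this.deriv
  have dyη : deriv (fun s => Phiy ξ ψ s) η = (a * (-Real.sin θ * (-3/2))) * e := by
    have : HasDerivAt (fun s => Phiy ξ ψ s) ((a * (-Real.sin θ * (-3/2))) * e) η := by
      simp only [phiy_eq]
      have hs : HasDerivAt (fun s : ℝ => Real.cos ((ψ - 3*s)/2)) (-Real.sin θ * (-3/2)) η :=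
        by have := (Real.hasDerivAt_cos θ).comp η (hin2 ψ η); exact this
      exact ((hs.const_mul a)).mul_const e
    exact this.deriv
  have hpyth : Real.sin θ ^ 2 + Real.cos θ ^ 2 = 1 := Real.sin_sq_add_cos_sq θ
  have key : e * e * (a * a) * (Real.sin θ ^ 2 + Real.cos θ ^ 2) = e * e * (a * a) := by
    rw [hpyth, mul_one]
  have key2 : e * e * (a * a * a) * (Real.sin θ ^ 2 + Real.cos θ ^ 2) = e * e * (a * a * a) := by
    rw [hpyth, mul_one]
  have hcψ : Real.cos ψ = a * a := by rw [← ha2]; ring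
  refine ⟨?_, ?_, ?_⟩
  · rw [dtξ, dxξ, dyξ, phix_eq, phiy_eq]
    simp only [← ha, ← he, ← hθ]
    ring
  · rw [dtψ, dxψ, dyψ, phix_eq, phiy_eq, hE]
    simp only [← ha, ← he, ← hθ]
    rw [hcψ]
    field_simp
    ring_nf
    ring_nf at key2
    linarith [key2]
  · rw [dtη, dxη, dyη, phix_eq, phiy_eq, hE]
    simp only [← ha, ← he, ← hθ]
    rw [hcψ]
    ring_nf
    ring_nf at key
    linarith [key]
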